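/- With f, g as in the preceding construction (f(x) = ⟨A_1 x, A_2 x⟩ + ⟨x,a⟩ + h(A_2 x), g(y) = ⟨B_1 y, B_2 y⟩ + ⟨y,b⟩ + h(B_1 y + B_1 a) + ⟨B_1 a, B_2 a⟩, with A invertible, B = (A^T)^{-1}, b = B^T[B_2;B_1]a), one has forr(χ_f, χ_g) = 1 and forr(χ_f, -χ_g) = -1. -/
import Mathlib


open Matrix

/-- `χ(b) = (-1)^b` for `b : 𝔽₂`. -/
noncomputable def chiSign (b : ZMod 2) : ℝ := (-1 : ℝ) ^ b.val

/-- Inner product mod 2. -/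
def ipF2 {ι : Type*} [Fintype ι] (u v : ι → ZMod 2) : ZMod 2 := ∑ i, u i * v i

lemma zmod2_cases (z : ZMod 2) : z = 0 ∨ z = 1 := by
  revert z; decide

lemma val11 : ZMod.val (1 : ZMod 2) = 1 := rfl
lemma val2 : (1 + 1 : ZMod 2) = 0 := rfl

lemma chiSign_zero : chiSign 0 = 1 := by simp [chiSign]
lemma chiSign_one : chiSign 1 = -1 := by simp [chiSign, val11]

lemma chiSign_add (x y : ZMod 2) : chiSign (x + y) = chiSign x * chiSign y := by
  rcases zmod2_cases x with hx | hx <;> rcases zmod2_cases y with hy | hy <;>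
    subst hx <;> subst hy <;> simp [chiSign, val11, val2]

lemma chiSign_sq (x : ZMod 2) : chiSign x * chiSign x = 1 := by
  rcases zmod2_cases x with hx | hx <;> subst hx <;> simp [chiSign, val11]

lemma ipF2_eq_dot {ι : Type*} [Fintype ι] (u v : ι → ZMod 2) : ipF2 u v = u ⬝ᵥ v := rfl

lemma gauss {n : ℕ} (c : Fin n → ZMod 2) :
    ∑ u : Fin n → ZMod 2, chiSign (ipF2 u c) = if c = 0 then (2:ℝ)^n else 0 := by
  split_ifs with hc
  · subst hc
    simp only [ipF2, Pi.zero_apply, mul_zero, Finset.sum_const_zero, chiSign_zero]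
    simp [Finset.card_univ]
  · obtain ⟨i, hi⟩ : ∃ i, c i ≠ 0 := by
      by_contra hcon
      push_neg at hcon
      exact hc (funext fun i => hcon i)
    have hci : c i = 1 := by
      rcases zmod2_cases (c i) with h0 | h1
      · exact absurd h0 hi
      · exact h1
    apply Finset.sum_ninvolution (g := fun u => Function.update u i (u i + 1))
    · intro u
      have key : ipF2 (Function.update u i (u i + 1)) c = ipF2 u c + 1 := by
        have : ∀ j, Function.update u i (u i + 1) j * c j
            = u j * c j + (if j = i then (1:ZMod 2) else 0) := by
          intro j
          by_cases hj : j = i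
          · subst hj; simp [Function.update_self, hci]
          · simp [Function.update_of_ne hj, hj]
        simp only [ipF2, this, Finset.sum_add_distrib, Finset.sum_ite_eq' Finset.univ i,
          Finset.mem_univ, if_true]
      rw [key, chiSign_add, chiSign_one]; ring
    · intro u hu heq
      have := congrFun heq i
      simp [Function.update_self] at this
    · intro u; exact Finset.mem_univ _
    · intro u
      funext j
      by_cases hj : j = i
      · subst hj
        simp only [Function.update_self]
        rw [add_assoc, val2, add_zero]
      · simp [Function.update_of_ne hj]

lemma ip_mulVec_left {ι : Type*} [Fintype ι] (M : Matrix ι ι (ZMod 2)) (v w : ι → ZMod 2) :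
    ipF2 (M.mulVec v) w = ipF2 v (Mᵀ.mulVec w) := by
  rw [ipF2_eq_dot, ipF2_eq_dot, dotProduct_comm, Matrix.dotProduct_mulVec,
    ← Matrix.mulVec_transpose, dotProduct_comm]

lemma submatrix_mulVec_apply {ι κ : Type*} [Fintype ι] [Fintype κ]
    (M : Matrix ι ι (ZMod 2)) (p : κ → ι) (v : ι → ZMod 2) :
    (M.submatrix p id).mulVec v = fun i => M.mulVec v (p i) := by
  funext i; simp [Matrix.mulVec, Matrix.submatrix_apply, dotProduct]

lemma ipF2_sum_split {n : ℕ} (u w : Fin n ⊕ Fin n → ZMod 2) :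
    ipF2 u w = ipF2 (u ∘ Sum.inl) (w ∘ Sum.inl) + ipF2 (u ∘ Sum.inr) (w ∘ Sum.inr) := by
  simp only [ipF2, Fintype.sum_sum_type]; rfl

lemma ipF2_add_right {ι : Type*} [Fintype ι] (u v w : ι → ZMod 2) :
    ipF2 u (v + w) = ipF2 u v + ipF2 u w := by
  simp only [ipF2_eq_dot, dotProduct_add]

lemma ipF2_add_left {ι : Type*} [Fintype ι] (u v w : ι → ZMod 2) :
    ipF2 (u + v) w = ipF2 u w + ipF2 v w := by
  simp only [ipF2_eq_dot, add_dotProduct]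

lemma ipF2_comm {ι : Type*} [Fintype ι] (u v : ι → ZMod 2) : ipF2 u v = ipF2 v u := by
  simp only [ipF2_eq_dot, dotProduct_comm]

lemma pi_add_eq_zero_iff {n : ℕ} (v w : Fin n → ZMod 2) : v + w = 0 ↔ v = w := by
  constructor
  · intro hzero
    funext j
    have hj := congrFun hzero j
    rcases zmod2_cases (v j) with h1 | h1 <;> rcases zmod2_cases (w j) with h2 | h2 <;>
      rw [h1, h2] <;> first | rfl | (exfalso; rw [Pi.add_apply, h1, h2] at hj; simp [val2] at hj)
  · rintro rfl
    funext j
    rcases zmod2_cases (v j) with h1 | h1 <;> rw [Pi.add_apply, h1] <;> simp [val2]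

lemma fromRows_mulVec_comp_inl {n : ℕ} (M N : Matrix (Fin n) (Fin n ⊕ Fin n) (ZMod 2))
    (a : Fin n ⊕ Fin n → ZMod 2) :
    ((Matrix.fromRows M N).mulVec a) ∘ Sum.inl = M.mulVec a := by
  funext i; simp [Matrix.mulVec, dotProduct]

lemma fromRows_mulVec_comp_inr {n : ℕ} (M N : Matrix (Fin n) (Fin n ⊕ Fin n) (ZMod 2))
    (a : Fin n ⊕ Fin n → ZMod 2) :
    ((Matrix.fromRows M N).mulVec a) ∘ Sum.inr = N.mulVec a := by
  funext i; simp [Matrix.mulVec, dotProduct]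

lemma mulVec_comp {ι κ : Type*} [Fintype ι] [Fintype κ]
    (M : Matrix ι ι (ZMod 2)) (p : κ → ι) (v : ι → ZMod 2) :
    (M.mulVec v) ∘ p = (M.submatrix p id).mulVec v := by
  rw [submatrix_mulVec_apply]; rfl

lemma key (m : ℕ)
    (A B : Matrix (Fin m ⊕ Fin m) (Fin m ⊕ Fin m) (ZMod 2))
    (hA : IsUnit A) (hB : B = (Aᵀ)⁻¹)
    (a b : Fin m ⊕ Fin m → ZMod 2)
    (hb : b = Bᵀ.mulVec
      ((Matrix.fromRows (B.submatrix Sum.inr id) (B.submatrix Sum.inl id)).mulVec a))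
    (h : (Fin m → ZMod 2) → ZMod 2)
    (f g : (Fin m ⊕ Fin m → ZMod 2) → ZMod 2)
    (hf : ∀ x, f x =
      ipF2 ((A.submatrix Sum.inl id).mulVec x) ((A.submatrix Sum.inr id).mulVec x)
        + ipF2 x a + h ((A.submatrix Sum.inr id).mulVec x))
    (hg : ∀ y, g y =
      ipF2 ((B.submatrix Sum.inl id).mulVec y) ((B.submatrix Sum.inr id).mulVec y)
        + ipF2 y b
        + h ((B.submatrix Sum.inl id).mulVec y + (B.submatrix Sum.inl id).mulVec a)
        + ipF2 ((B.submatrix Sum.inl id).mulVec a) ((B.submatrix Sum.inr id).mulVec a))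
    (y : Fin m ⊕ Fin m → ZMod 2) :
    ∑ x : Fin m ⊕ Fin m → ZMod 2, chiSign (f x) * chiSign (ipF2 x y)
      = (2:ℝ)^m * chiSign (g y) := by
  classical
  have hdet : IsUnit A.det := (Matrix.isUnit_iff_isUnit_det A).1 hA
  have hAAi : A * A⁻¹ = 1 := Matrix.mul_nonsing_inv A hdet
  have hAiA : A⁻¹ * A = 1 := Matrix.nonsing_inv_mul A hdet
  have hAiT : (A⁻¹)ᵀ = B := by rw [hB, Matrix.transpose_nonsing_inv]
  let e : (Fin m ⊕ Fin m → ZMod 2) ≃ (Fin m ⊕ Fin m → ZMod 2) :=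
    { toFun := fun u => A⁻¹.mulVec u
      invFun := fun x => A.mulVec x
      left_inv := fun u => by
        show A.mulVec (A⁻¹.mulVec u) = u
        rw [Matrix.mulVec_mulVec, hAAi, Matrix.one_mulVec]
      right_inv := fun x => by
        show A⁻¹.mulVec (A.mulVec x) = x
        rw [Matrix.mulVec_mulVec, hAiA, Matrix.one_mulVec] }
  set c : Fin m ⊕ Fin m → ZMod 2 := B.mulVec (a + y) with hcdef
  set c1 : Fin m → ZMod 2 := c ∘ Sum.inl with hc1
  set c2 : Fin m → ZMod 2 := c ∘ Sum.inr with hc2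
  have step1 : ∀ x, chiSign (f x) * chiSign (ipF2 x y)
      = chiSign (ipF2 ((A.submatrix Sum.inl id).mulVec x) ((A.submatrix Sum.inr id).mulVec x)
          + h ((A.submatrix Sum.inr id).mulVec x) + ipF2 x (a + y)) := by
    intro x
    rw [← chiSign_add, hf x, ipF2_add_right]
    congr 1
    ring
  have step2 : ∀ u : Fin m ⊕ Fin m → ZMod 2,
      ipF2 ((A.submatrix Sum.inl id).mulVec (e u)) ((A.submatrix Sum.inr id).mulVec (e u))
        + h ((A.submatrix Sum.inr id).mulVec (e u)) + ipF2 (e u) (a + y)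
      = ipF2 (u ∘ Sum.inl) (u ∘ Sum.inr) + h (u ∘ Sum.inr) + ipF2 u c := by
    intro u
    have hsub1 : (A.submatrix Sum.inl id).mulVec (e u) = u ∘ Sum.inl := by
      rw [submatrix_mulVec_apply]
      funext i
      show A.mulVec (A⁻¹.mulVec u) (Sum.inl i) = u (Sum.inl i)
      rw [Matrix.mulVec_mulVec, hAAi, Matrix.one_mulVec]
    have hsub2 : (A.submatrix Sum.inr id).mulVec (e u) = u ∘ Sum.inr := by
      rw [submatrix_mulVec_apply]
      funext i
      show A.mulVec (A⁻¹.mulVec u) (Sum.inr i) = u (Sum.inr i)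
      rw [Matrix.mulVec_mulVec, hAAi, Matrix.one_mulVec]
    have hsub3 : ipF2 (e u) (a + y) = ipF2 u c := by
      show ipF2 (A⁻¹.mulVec u) (a + y) = ipF2 u c
      rw [ip_mulVec_left, hAiT]
    rw [hsub1, hsub2, hsub3]
  have harg : g y = h c1 + ipF2 c1 c2 := by
    have hc1' : c1 = (B.submatrix Sum.inl id).mulVec a + (B.submatrix Sum.inl id).mulVec y := by
      rw [hc1, hcdef, Matrix.mulVec_add]
      show (B.mulVec a + B.mulVec y) ∘ Sum.inl = _
      rw [show (B.mulVec a + B.mulVec y) ∘ Sum.inl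
          = (B.mulVec a) ∘ Sum.inl + (B.mulVec y) ∘ Sum.inl from rfl,
        mulVec_comp, mulVec_comp]
    have hc2' : c2 = (B.submatrix Sum.inr id).mulVec a + (B.submatrix Sum.inr id).mulVec y := by
      rw [hc2, hcdef, Matrix.mulVec_add]
      show (B.mulVec a + B.mulVec y) ∘ Sum.inr = _
      rw [show (B.mulVec a + B.mulVec y) ∘ Sum.inr
          = (B.mulVec a) ∘ Sum.inr + (B.mulVec y) ∘ Sum.inr from rfl,
        mulVec_comp, mulVec_comp]
    have hyb : ipF2 y b = ipF2 ((B.submatrix Sum.inl id).mulVec y) ((B.submatrix Sum.inr id).mulVec a)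
        + ipF2 ((B.submatrix Sum.inr id).mulVec y) ((B.submatrix Sum.inl id).mulVec a) := by
      rw [hb, ← ip_mulVec_left, ipF2_sum_split, fromRows_mulVec_comp_inl,
        fromRows_mulVec_comp_inr, mulVec_comp, mulVec_comp]
    have hharg : (B.submatrix Sum.inl id).mulVec y + (B.submatrix Sum.inl id).mulVec a = c1 := by
      rw [hc1']; ring
    rw [hg y, hyb, hharg, hc1', hc2']
    rw [ipF2_add_left, ipF2_add_right, ipF2_add_right]
    rw [ipF2_comm ((B.submatrix Sum.inr id).mulVec y) ((B.submatrix Sum.inl id).mulVec a)]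
    rw [ipF2_comm ((B.submatrix Sum.inl id).mulVec a) ((B.submatrix Sum.inr id).mulVec y)]
    ring
  calc ∑ x : Fin m ⊕ Fin m → ZMod 2, chiSign (f x) * chiSign (ipF2 x y)
      = ∑ x : Fin m ⊕ Fin m → ZMod 2,
          chiSign (ipF2 ((A.submatrix Sum.inl id).mulVec x) ((A.submatrix Sum.inr id).mulVec x)
            + h ((A.submatrix Sum.inr id).mulVec x) + ipF2 x (a + y)) :=
        Finset.sum_congr rfl fun x _ => step1 x
    _ = ∑ u : Fin m ⊕ Fin m → ZMod 2,
          chiSign (ipF2 (u ∘ Sum.inl) (u ∘ Sum.inr) + h (u ∘ Sum.inr) + ipF2 u c) := by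
        rw [← Equiv.sum_comp e (fun x => chiSign
          (ipF2 ((A.submatrix Sum.inl id).mulVec x) ((A.submatrix Sum.inr id).mulVec x)
            + h ((A.submatrix Sum.inr id).mulVec x) + ipF2 x (a + y)))]
        exact Finset.sum_congr rfl fun u _ => by rw [step2 u]
    _ = ∑ p : (Fin m → ZMod 2) × (Fin m → ZMod 2),
          chiSign (ipF2 p.1 p.2 + h p.2 + (ipF2 p.1 c1 + ipF2 p.2 c2)) := by
        rw [← Equiv.sum_comp (Equiv.sumArrowEquivProdArrow (Fin m) (Fin m) (ZMod 2)).symm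
          (fun u => chiSign (ipF2 (u ∘ Sum.inl) (u ∘ Sum.inr) + h (u ∘ Sum.inr) + ipF2 u c))]
        refine Finset.sum_congr rfl fun p _ => ?_
        show chiSign (ipF2 (Sum.elim p.1 p.2 ∘ Sum.inl) (Sum.elim p.1 p.2 ∘ Sum.inr)
            + h (Sum.elim p.1 p.2 ∘ Sum.inr) + ipF2 (Sum.elim p.1 p.2) c) = _
        rw [ipF2_sum_split (Sum.elim p.1 p.2) c]
        rfl
    _ = ∑ u2 : Fin m → ZMod 2, ∑ u1 : Fin m → ZMod 2,
          chiSign (ipF2 u1 (u2 + c1)) * chiSign (h u2 + ipF2 u2 c2) := by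
        rw [Fintype.sum_prod_type, Finset.sum_comm]
        refine Finset.sum_congr rfl fun u2 _ => Finset.sum_congr rfl fun u1 _ => ?_
        rw [← chiSign_add, ipF2_add_right]
        congr 1
        ring
    _ = ∑ u2 : Fin m → ZMod 2,
          (if u2 = c1 then (2:ℝ)^m * chiSign (h u2 + ipF2 u2 c2) else 0) := by
        refine Finset.sum_congr rfl fun u2 _ => ?_
        rw [← Finset.sum_mul]
        have : (u2 + c1 = 0) ↔ (u2 = c1) := pi_add_eq_zero_iff u2 c1
        rw [gauss (u2 + c1)]
        by_cases h' : u2 = c1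
        · rw [if_pos (this.mpr h'), if_pos h']
        · rw [if_neg (fun hz => h' (this.mp hz)), if_neg h', zero_mul]
    _ = (2:ℝ)^m * chiSign (h c1 + ipF2 c1 c2) := by
        rw [Finset.sum_ite_eq' Finset.univ c1
          (fun u2 => (2:ℝ)^m * chiSign (h u2 + ipF2 u2 c2))]
        simp
    _ = (2:ℝ)^m * chiSign (g y) := by rw [harg]

theorem stmt6 (m : ℕ)
    (A B : Matrix (Fin m ⊕ Fin m) (Fin m ⊕ Fin m) (ZMod 2))
    (hA : IsUnit A) (hB : B = (Aᵀ)⁻¹)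
    (a b : Fin m ⊕ Fin m → ZMod 2)
    (hb : b = Bᵀ.mulVec
      ((Matrix.fromRows (B.submatrix Sum.inr id) (B.submatrix Sum.inl id)).mulVec a))
    (h : (Fin m → ZMod 2) → ZMod 2)
    (f g : (Fin m ⊕ Fin m → ZMod 2) → ZMod 2)
    (hf : ∀ x, f x =
      ipF2 ((A.submatrix Sum.inl id).mulVec x) ((A.submatrix Sum.inr id).mulVec x)
        + ipF2 x a + h ((A.submatrix Sum.inr id).mulVec x))
    (hg : ∀ y, g y =
      ipF2 ((B.submatrix Sum.inl id).mulVec y) ((B.submatrix Sum.inr id).mulVec y)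
        + ipF2 y b
        + h ((B.submatrix Sum.inl id).mulVec y + (B.submatrix Sum.inl id).mulVec a)
        + ipF2 ((B.submatrix Sum.inl id).mulVec a) ((B.submatrix Sum.inr id).mulVec a)) :
    (2 : ℝ) ^ (-(m : ℤ)) *
        (∑ y : Fin m ⊕ Fin m → ZMod 2,
          ((2 : ℝ) ^ (-(2 * m : ℤ)) *
            ∑ x : Fin m ⊕ Fin m → ZMod 2, chiSign (f x) * chiSign (ipF2 x y)) *
          chiSign (g y)) = 1
    ∧ (2 : ℝ) ^ (-(m : ℤ)) *
        (∑ y : Fin m ⊕ Fin m → ZMod 2,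
          ((2 : ℝ) ^ (-(2 * m : ℤ)) *
            ∑ x : Fin m ⊕ Fin m → ZMod 2, chiSign (f x) * chiSign (ipF2 x y)) *
          (-(chiSign (g y)))) = -1 := by
  have hkey := key m A B hA hB a b hb h f g hf hg
  have hcard : Fintype.card (Fin m ⊕ Fin m → ZMod 2) = 2 ^ (2 * m) := by
    simp [Fintype.card_fun, two_mul]
  have hterm : ∀ y : Fin m ⊕ Fin m → ZMod 2,
      ((2 : ℝ) ^ (-(2 * m : ℤ)) *
        ∑ x : Fin m ⊕ Fin m → ZMod 2, chiSign (f x) * chiSign (ipF2 x y)) * chiSign (g y)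
      = (2 : ℝ) ^ (-(2 * m : ℤ)) * (2:ℝ)^m := by
    intro y
    rw [hkey y]
    calc ((2 : ℝ) ^ (-(2 * m : ℤ)) * ((2:ℝ)^m * chiSign (g y))) * chiSign (g y)
        = ((2 : ℝ) ^ (-(2 * m : ℤ)) * (2:ℝ)^m) * (chiSign (g y) * chiSign (g y)) := by ring
      _ = (2 : ℝ) ^ (-(2 * m : ℤ)) * (2:ℝ)^m := by rw [chiSign_sq, mul_one]
  have h2 : (2:ℝ) ≠ 0 := two_ne_zero
  have h1 : (2 : ℝ) ^ (-(m : ℤ)) *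
      (∑ y : Fin m ⊕ Fin m → ZMod 2,
        ((2 : ℝ) ^ (-(2 * m : ℤ)) *
          ∑ x : Fin m ⊕ Fin m → ZMod 2, chiSign (f x) * chiSign (ipF2 x y)) *
        chiSign (g y)) = 1 := by
    rw [Finset.sum_congr rfl (fun y _ => hterm y), Finset.sum_const, Finset.card_univ, hcard,
      nsmul_eq_mul]
    push_cast
    rw [← zpow_natCast (2:ℝ) (2*m), ← zpow_natCast (2:ℝ) m, ← zpow_add₀ h2, ← zpow_add₀ h2,
      ← zpow_add₀ h2]
    push_cast
    norm_num
  refine ⟨h1, ?_⟩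
  simp only [mul_neg, Finset.sum_neg_distrib]
  rw [h1]
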